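/- For every integer n ≥ 3 there exists a bicolored point set S of n points in the plane in general position, containing at least one red and at least one blue point, such that some minimum bichromatic spanning tree of S has an edge that crosses exactly n − 3 other edges of the tree. -/

import Mathlib

/-!
Take the red points `r₁ = (0, 0)`, `r₂ = (1, 0)` and blue points on the parabola `y = 1 + x²` at
`x = -2/3, -5/3, -8/3, …`; no three of them are collinear. Join `r₁` to every blue point and `r₂`
to the blue point `b₀` at `x = -2/3`. The segment `r₂b₀` crosses every segment `r₁b` with
`b ≠ b₀`, that is, `n - 3` edges.

This tree is a minimum. In a connected bichromatic graph on these points every blue point is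
joined to a red one, and some blue point is joined to both (a path from `r₁` to `r₂` passes through
one). Every blue point is nearer to `r₁` than to `r₂`, and `b₀` is the blue point nearest to `r₂`,
so the total length is at least `∑_b |r₁b| + |r₂b₀|`, the length of the tree.
-/

open scoped Classical

noncomputable section

/-- Points in the Euclidean plane. -/
abbrev Pt : Type := EuclideanSpace ℝ (Fin 2)

/-- `S` is in general position: no three (distinct) points of `S` are collinear. -/
def GenPos (S : Finset Pt) : Prop :=
  ∀ p ∈ S, ∀ q ∈ S, ∀ r ∈ S, p ≠ q → p ≠ r → q ≠ r →
    ¬ Collinear ℝ ({p, q, r} : Set Pt)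

/-- The closed segments `[a,b]` and `[c,d]` cross: they share a point that is
interior to both segments. -/
def SegCross (a b c d : Pt) : Prop :=
  ∃ p : Pt, p ∈ openSegment ℝ a b ∧ p ∈ openSegment ℝ c d

/-- Two unordered edges (over vertices lying in the plane) cross. -/
def EdgeCross {S : Finset Pt} (e₁ e₂ : Sym2 ↥S) : Prop :=
  ∃ a b c d : ↥S, e₁ = s(a, b) ∧ e₂ = s(c, d) ∧ SegCross ↑a ↑b ↑c ↑d

/-- A (straight-line drawn) graph is plane if no two of its edges cross. -/
def PlaneGraph {S : Finset Pt} (G : SimpleGraph ↥S) : Prop :=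
  ∀ e₁ ∈ G.edgeSet, ∀ e₂ ∈ G.edgeSet, e₁ ≠ e₂ → ¬ EdgeCross e₁ e₂

/-- Every edge has one red (`true`) and one blue (`false`) endpoint. -/
def Bichromatic {S : Finset Pt} (col : Pt → Bool) (G : SimpleGraph ↥S) : Prop :=
  ∀ u v : ↥S, G.Adj u v → col ↑u ≠ col ↑v

/-- The Euclidean length of an unordered edge. -/
def edgeLen {S : Finset Pt} : Sym2 ↥S → ℝ :=
  Sym2.lift ⟨fun a b => dist (a : Pt) (b : Pt), fun _ _ => dist_comm _ _⟩

/-- The total Euclidean length of the edges of a graph drawn with straight-line edges. -/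
def graphLen {S : Finset Pt} (G : SimpleGraph ↥S) : ℝ :=
  ∑ᶠ e ∈ G.edgeSet, edgeLen e

/-- A bichromatic spanning tree of `S`. -/
def IsBST {S : Finset Pt} (col : Pt → Bool) (G : SimpleGraph ↥S) : Prop :=
  G.IsTree ∧ Bichromatic col G

/-- A minimum bichromatic spanning tree of `S`. -/
def IsMinBST {S : Finset Pt} (col : Pt → Bool) (G : SimpleGraph ↥S) : Prop :=
  IsBST col G ∧ ∀ G' : SimpleGraph ↥S, IsBST col G' → graphLen G ≤ graphLen G'


namespace SimpleGraph

variable {V : Type*}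

section TwoRed

variable {G : SimpleGraph V} {col : V → Bool} {r₁ r₂ : V}

lemma Connected.exists_adj_adj_of_two_red (hG : G.Connected)
    (hcol : ∀ u v, G.Adj u v → col u ≠ col v) (hred : ∀ v, col v = true ↔ v = r₁ ∨ v = r₂)
    (h₁₂ : r₁ ≠ r₂) : ∃ b, G.Adj r₁ b ∧ G.Adj r₂ b := by
  have hr₁ : col r₁ = true := (hred r₁).2 (.inl rfl)
  have hr₂ : col r₂ = true := (hred r₂).2 (.inr rfl)
  let N : Set V := {v | v = r₁ ∨ G.Adj r₁ v}
  have hr₂N : r₂ ∉ N := by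
    rintro (h | h)
    exacts [h₁₂ h.symm, hcol _ _ h (hr₁.trans hr₂.symm)]
  -- A walk from `r₁` to `r₂` leaves `N` from a blue neighbour of `r₁` into a red vertex `≠ r₁`.
  obtain ⟨p⟩ := hG.preconnected r₁ r₂
  obtain ⟨d, -, hfst, hsnd⟩ := p.exists_boundary_dart N (.inl rfl) hr₂N
  have hadj : G.Adj r₁ d.fst := hfst.resolve_left fun h => hsnd (.inr (h ▸ d.adj))
  have hsnd_red : col d.snd = true := by
    have h₁ := hcol _ _ hadj
    have h₂ := hcol _ _ d.adj
    rw [hr₁] at h₁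
    cases h : col d.snd <;> simp_all
  obtain h | h := (hred _).1 hsnd_red
  · exact absurd (.inl h) hsnd
  · exact ⟨d.fst, hadj, h ▸ d.adj.symm⟩

def nearRed (G : SimpleGraph V) (r₁ r₂ b : V) : V := if G.Adj r₁ b then r₁ else r₂

lemma nearRed_mem [DecidableEq V] (b : V) : G.nearRed r₁ r₂ b ∈ ({r₁, r₂} : Finset V) := by
  unfold nearRed; split_ifs <;> simp

lemma Connected.adj_nearRed [DecidableEq V] (hG : G.Connected)
    (hcol : ∀ u v, G.Adj u v → col u ≠ col v) (hred : ∀ v, col v = true ↔ v = r₁ ∨ v = r₂)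
    {b : V} (hb : b ∉ ({r₁, r₂} : Finset V)) : G.Adj (G.nearRed r₁ r₂ b) b := by
  unfold nearRed
  split_ifs with h
  · exact h
  have hb' : col b = false := by simpa [← hred] using hb
  have : Nontrivial V := nontrivial_of_ne b r₁ (by rintro rfl; simp at hb)
  obtain ⟨u, hu⟩ := hG.preconnected.exists_adj_of_nontrivial b
  have hu_red : col u = true := by simpa [hb'] using (hcol _ _ hu).symm
  obtain rfl | rfl := (hred u).1 hu_red
  exacts [absurd hu.symm h, hu.symm]

lemma Connected.sum_nearRed_add_le_sum_edgeFinset [Fintype V] [DecidableEq V]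
    (hG : G.Connected)
    (hcol : ∀ u v, G.Adj u v → col u ≠ col v) (hred : ∀ v, col v = true ↔ v = r₁ ∨ v = r₂)
    (h₁₂ : r₁ ≠ r₂) (w : Sym2 V → ℝ) (hw : ∀ e, 0 ≤ w e) {x : V} (hx₁ : G.Adj r₁ x)
    (hx₂ : G.Adj r₂ x) :
    ∑ b ∈ ({r₁, r₂} : Finset V)ᶜ, w s(G.nearRed r₁ r₂ b, b) + w s(r₂, x) ≤
      ∑ e ∈ G.edgeFinset, w e := by
  let chosen := (({r₁, r₂} : Finset V)ᶜ).image fun b => s(G.nearRed r₁ r₂ b, b)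
  have hinj : Set.InjOn (fun b => s(G.nearRed r₁ r₂ b, b)) ↑(({r₁, r₂} : Finset V)ᶜ) := by
    intro b hb b' hb' h
    obtain ⟨-, h⟩ | ⟨h, -⟩ := Sym2.eq_iff.1 h
    · exact h
    · simp only [Finset.coe_compl, Set.mem_compl_iff, Finset.mem_coe] at hb'
      exact absurd (h ▸ nearRed_mem b) hb'
  have hextra : s(r₂, x) ∉ chosen := by
    simp only [chosen, Finset.mem_image, not_exists, not_and]
    intro b hb he
    obtain ⟨hb₁, rfl⟩ | ⟨-, rfl⟩ := Sym2.eq_iff.1 he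
    · simp only [nearRed, hx₁, if_true] at hb₁
      exact h₁₂ hb₁
    · exact (Finset.mem_compl.1 hb) (by simp)
  have hsub : insert s(r₂, x) chosen ⊆ G.edgeFinset := by
    simp only [Finset.insert_subset_iff, mem_edgeFinset, mem_edgeSet, chosen,
      Finset.image_subset_iff, Finset.mem_compl]
    exact ⟨hx₂, fun b hb => hG.adj_nearRed hcol hred hb⟩
  calc _ = ∑ e ∈ insert s(r₂, x) chosen, w e := by
        rw [Finset.sum_insert hextra, Finset.sum_image hinj, add_comm]
    _ ≤ ∑ e ∈ G.edgeFinset, w e :=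
        Finset.sum_le_sum_of_subset_of_nonneg hsub fun e _ _ => hw e

theorem Connected.sum_le_sum_edgeFinset_of_two_red [Fintype V] [DecidableEq V]
    (hG : G.Connected)
    (hcol : ∀ u v, G.Adj u v → col u ≠ col v) (hred : ∀ v, col v = true ↔ v = r₁ ∨ v = r₂)
    (h₁₂ : r₁ ≠ r₂) (w : Sym2 V → ℝ) (hw : ∀ e, 0 ≤ w e) (b₀ : V)
    (hnear : ∀ b ∉ ({r₁, r₂} : Finset V), w s(r₁, b) ≤ w s(r₂, b))
    (hfar : ∀ b ∉ ({r₁, r₂} : Finset V), w s(r₂, b₀) ≤ w s(r₂, b)) :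
    ∑ b ∈ ({r₁, r₂} : Finset V)ᶜ, w s(r₁, b) + w s(r₂, b₀) ≤ ∑ e ∈ G.edgeFinset, w e := by
  obtain ⟨x, hx₁, hx₂⟩ := hG.exists_adj_adj_of_two_red hcol hred h₁₂
  have hx : x ∉ ({r₁, r₂} : Finset V) := by
    have := hcol _ _ hx₁
    rw [(hred r₁).2 (.inl rfl)] at this
    simpa [← hred] using this
  refine le_trans ?_ (hG.sum_nearRed_add_le_sum_edgeFinset hcol hred h₁₂ w hw hx₁ hx₂)
  gcongr with b hb
  · unfold nearRed; split_ifs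
    exacts [le_rfl, hnear b (Finset.mem_compl.1 hb)]
  · exact hfar x hx

end TwoRed

section StarWithLeaf

variable [Fintype V] [DecidableEq V]

def starWithLeafEdges (c l b : V) : Finset (Sym2 V) :=
  insert s(l, b) ((({c, l} : Finset V)ᶜ).image (s(c, ·)))

/-- The star centred at `c` spanning all vertices but `l`, with `l` attached as a leaf to `b`. -/
def starWithLeaf (c l b : V) : SimpleGraph V :=
  fromEdgeSet ↑(starWithLeafEdges c l b)

variable {c l b : V} (hcl : c ≠ l) (hb : b ∉ ({c, l} : Finset V))
include hb

lemma edgeSet_starWithLeaf : (starWithLeaf c l b).edgeSet = ↑(starWithLeafEdges c l b) := by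
  rw [starWithLeaf, edgeSet_fromEdgeSet, sdiff_eq_left, Set.disjoint_left]
  simp only [starWithLeafEdges, Finset.coe_insert, Finset.coe_image, Finset.coe_compl,
    Set.mem_insert_iff, Set.mem_image, Set.mem_compl_iff, Finset.mem_coe]
  rintro e (rfl | ⟨v, hv, rfl⟩) <;> simp only [Sym2.mem_diagSet, Sym2.mk_isDiag_iff]
  · rintro rfl; simp at hb
  · rintro rfl; simp at hv

lemma edgeFinset_starWithLeaf : (starWithLeaf c l b).edgeFinset = starWithLeafEdges c l b := by
  rw [← Finset.coe_inj, coe_edgeFinset, edgeSet_starWithLeaf hb]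

lemma starWithLeaf_adj_center {v : V} (hv : v ∉ ({c, l} : Finset V)) :
    (starWithLeaf c l b).Adj c v := by
  rw [← mem_edgeSet, edgeSet_starWithLeaf hb, starWithLeafEdges]
  simp only [Finset.coe_insert, Finset.coe_image, Set.mem_insert_iff]
  exact .inr ⟨v, by simpa [and_comm] using hv, rfl⟩

lemma starWithLeaf_adj_leaf : (starWithLeaf c l b).Adj l b := by
  rw [← mem_edgeSet, edgeSet_starWithLeaf hb, starWithLeafEdges]
  simp

lemma connected_starWithLeaf : (starWithLeaf c l b).Connected := by
  rw [connected_iff_exists_forall_reachable]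
  refine ⟨c, fun v => ?_⟩
  by_cases hv : v ∈ ({c, l} : Finset V)
  · obtain rfl | rfl := Finset.mem_insert.1 hv |>.imp_right Finset.mem_singleton.1
    · rfl
    · exact (starWithLeaf_adj_center hb hb).reachable.trans
        (starWithLeaf_adj_leaf hb).symm.reachable
  · exact (starWithLeaf_adj_center hb hv).reachable

include hcl in
lemma sum_starWithLeafEdges {M : Type*} [AddCommMonoid M] (w : Sym2 V → M) :
    ∑ e ∈ starWithLeafEdges c l b, w e = ∑ v ∈ ({c, l} : Finset V)ᶜ, w s(c, v) + w s(l, b) := by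
  have hleaf : s(l, b) ∉ (({c, l} : Finset V)ᶜ).image (s(c, ·)) := by
    simp only [Finset.mem_image, Finset.mem_compl, not_exists, not_and]
    intro v hv h
    obtain ⟨h, -⟩ | ⟨rfl, -⟩ := Sym2.eq_iff.1 h
    · exact hcl h
    · exact hb (by simp)
  rw [starWithLeafEdges, Finset.sum_insert hleaf, add_comm,
    Finset.sum_image fun _ _ _ _ h => Sym2.congr_right.1 h]

include hcl in
lemma isTree_starWithLeaf : (starWithLeaf c l b).IsTree := by
  rw [isTree_iff_connected_and_card]
  refine ⟨connected_starWithLeaf hb, ?_⟩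
  have hcard : (starWithLeafEdges c l b).card = Fintype.card V - 2 + 1 := by
    rw [Finset.card_eq_sum_ones, sum_starWithLeafEdges hcl hb, ← Finset.card_eq_sum_ones,
      Finset.card_compl, Finset.card_pair hcl]
  have : 2 ≤ Fintype.card V := by
    simpa [Finset.card_pair hcl] using Finset.card_le_univ ({c, l} : Finset V)
  rw [edgeSet_starWithLeaf hb, Nat.card_coe_set_eq, Set.ncard_coe_finset, hcard,
    Nat.card_eq_fintype_card]
  omega

lemma starWithLeaf_adj_ne_of_two_red {col : V → Bool}
    (hred : ∀ v, col v = true ↔ v = c ∨ v = l) {u v : V} (huv : (starWithLeaf c l b).Adj u v) :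
    col u ≠ col v := by
  have hb' : col b = false := by simpa [← hred] using hb
  rw [← mem_edgeSet, edgeSet_starWithLeaf hb, starWithLeafEdges] at huv
  simp only [Finset.coe_insert, Finset.coe_image, Set.mem_insert_iff, Set.mem_image,
    Finset.coe_compl, Set.mem_compl_iff, Finset.mem_coe] at huv
  have hc : col c = true := (hred c).2 (.inl rfl)
  have hl : col l = true := (hred l).2 (.inr rfl)
  obtain h | ⟨x, hx, h⟩ := huv
  · obtain ⟨rfl, rfl⟩ | ⟨rfl, rfl⟩ := Sym2.eq_iff.1 h <;> simp [hl, hb']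
  · have hx' : col x = false := by simpa [← hred] using hx
    obtain ⟨rfl, rfl⟩ | ⟨rfl, rfl⟩ := Sym2.eq_iff.1 h <;> simp [hc, hx']

include hcl in
lemma card_edgeSet_starWithLeaf_inter (P : Sym2 V → Prop)
    (hP : ∀ v ∉ ({c, l} : Finset V), P s(c, v) ↔ v ≠ b) :
    Nat.card {e | e ∈ (starWithLeaf c l b).edgeSet ∧ e ≠ s(l, b) ∧ P e} =
      Fintype.card V - 3 := by
  have hset : {e | e ∈ (starWithLeaf c l b).edgeSet ∧ e ≠ s(l, b) ∧ P e} =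
      ↑((({c, l, b} : Finset V)ᶜ).image (s(c, ·))) := by
    ext e
    rw [Set.mem_ofPred_eq, edgeSet_starWithLeaf hb, Finset.mem_coe, Finset.mem_coe,
      starWithLeafEdges, Finset.mem_insert, Finset.mem_image, Finset.mem_image]
    constructor
    · rintro ⟨h | ⟨v, hv, rfl⟩, hne, hPe⟩
      · exact absurd h hne
      · have hvb := (hP v (Finset.mem_compl.1 hv)).1 hPe
        refine ⟨v, Finset.mem_compl.2 ?_, rfl⟩
        simp_all [Finset.mem_compl]
    · rintro ⟨v, hv, rfl⟩
      have hv' : v ∉ ({c, l} : Finset V) := by simp_all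
      refine ⟨.inr ⟨v, Finset.mem_compl.2 hv', rfl⟩, fun h => ?_, (hP v hv').2 ?_⟩
      · obtain ⟨h, -⟩ | ⟨rfl, -⟩ := Sym2.eq_iff.1 h
        · exact hcl h
        · exact hb (by simp)
      · rintro rfl; simp at hv
  have hcard : ({c, l, b} : Finset V).card = 3 := by
    rw [Finset.card_insert_of_notMem, Finset.card_pair]
    · rintro rfl; simp at hb
    · simp only [Finset.mem_insert, Finset.mem_singleton, not_or] at hb ⊢
      exact ⟨hcl, fun h => hb.1 h.symm⟩
  rw [hset, Nat.card_coe_set_eq, Set.ncard_coe_finset,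
    Finset.card_image_of_injective _ fun _ _ h => Sym2.congr_right.1 h, Finset.card_compl, hcard]

end StarWithLeaf

end SimpleGraph

lemma disjoint_openSegment_of_not_collinear {E : Type*} [AddCommGroup E] [Module ℝ E]
    {a b c : E} (h : ¬ Collinear ℝ ({a, b, c} : Set E)) :
    Disjoint (openSegment ℝ a c) (openSegment ℝ b c) := by
  rw [Set.disjoint_left]
  intro p hpa hpb
  have hac : a ≠ c := by
    rintro rfl
    exact h (by simpa [Set.pair_comm] using collinear_pair ℝ a b)
  have hpc : p ≠ c := by
    rintro rfl
    exact hac (right_mem_openSegment_iff.1 hpa)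
  have hline : ∀ x, p ∈ openSegment ℝ x c → x ∈ line[ℝ, p, c] := fun x hx =>
    (mem_segment_iff_wbtw.1 (openSegment_subset_segment ℝ x c hx)).collinear
      |>.mem_affineSpan_of_mem_of_ne (by simp) (by simp) (by simp) hpc
  exact h ((collinear_insert_insert_of_mem_affineSpan_pair (hline a hpa) (hline b hpb)).subset
    (by intro x; simp only [Set.mem_insert_iff, Set.mem_singleton_iff]; tauto))

lemma dist_eq_sqrt_coords (p q : Pt) : dist p q = √((p 0 - q 0) ^ 2 + (p 1 - q 1) ^ 2) := by
  rw [EuclideanSpace.dist_eq, Fin.sum_univ_two, Real.dist_eq, Real.dist_eq, sq_abs, sq_abs]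

lemma not_collinear_of_cross_ne_zero {p q r : Pt}
    (h : (q 0 - p 0) * (r 1 - p 1) - (q 1 - p 1) * (r 0 - p 0) ≠ 0) :
    ¬ Collinear ℝ ({p, q, r} : Set Pt) := by
  rw [collinear_iff_of_mem (Set.mem_insert p _)]
  rintro ⟨v, hv⟩
  obtain ⟨b, rfl⟩ := hv q (by simp)
  obtain ⟨c, rfl⟩ := hv r (by simp)
  apply h
  simp only [vadd_eq_add, PiLp.add_apply, PiLp.smul_apply, smul_eq_mul]
  ring

lemma genPos_image_of_lt {f : ℕ → Pt}
    (hf : ∀ i j k, i < j → j < k → ¬ Collinear ℝ {f i, f j, f k}) (s : Finset ℕ) :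
    GenPos (s.image f) := by
  have hperm : ∀ i j k, i ≠ j → i ≠ k → j ≠ k → ¬ Collinear ℝ {f i, f j, f k} := by
    intro i j k hij hik hjk
    wlog h₁ : i < j generalizing i j k
    · rw [Set.insert_comm]; exact this j i k hij.symm hjk hik (by omega)
    wlog h₂ : j < k generalizing i j k
    · rw [Set.pair_comm]
      rcases Nat.lt_or_gt_of_ne hik with h | h
      · exact hf i k j h (by omega)
      · rw [Set.insert_comm]; exact hf k i j h h₁
    exact hf i j k h₁ h₂
  simp only [GenPos, Finset.mem_image]
  rintro _ ⟨i, -, rfl⟩ _ ⟨j, -, rfl⟩ _ ⟨k, -, rfl⟩ hij hik hjk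
  exact hperm i j k (by rintro rfl; exact hij rfl) (by rintro rfl; exact hik rfl)
    (by rintro rfl; exact hjk rfl)

def parabolaPt (t : ℝ) : Pt := !₂[t, 1 + t ^ 2]

@[simp] lemma parabolaPt_zero (t : ℝ) : parabolaPt t 0 = t := by simp [parabolaPt]
@[simp] lemma parabolaPt_one (t : ℝ) : parabolaPt t 1 = 1 + t ^ 2 := by simp [parabolaPt]

lemma not_collinear_axis_axis_parabola {a a' : ℝ} (h : a ≠ a') (t : ℝ) :
    ¬ Collinear ℝ ({!₂[a, 0], !₂[a', 0], parabolaPt t} : Set Pt) := by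
  apply not_collinear_of_cross_ne_zero
  simp only [parabolaPt_zero, parabolaPt_one, Matrix.cons_val_zero, Matrix.cons_val_one,
    sub_zero, sub_self, zero_mul]
  exact mul_ne_zero (sub_ne_zero.2 h.symm) (by positivity)

lemma not_collinear_axis_parabola_parabola {a u v : ℝ} (ha : 0 ≤ a) (huv : u ≠ v)
    (hsum : u + v ≤ 0) (hprod : 1 < u * v) :
    ¬ Collinear ℝ ({!₂[a, 0], parabolaPt u, parabolaPt v} : Set Pt) := by
  apply not_collinear_of_cross_ne_zero
  simp only [parabolaPt_zero, parabolaPt_one, Matrix.cons_val_zero, Matrix.cons_val_one,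
    sub_zero]
  rw [show (u - a) * (1 + v ^ 2) - (1 + u ^ 2) * (v - a) = (u - v) * (1 - u * v + a * (u + v))
    by ring]
  refine mul_ne_zero (sub_ne_zero.2 huv) (ne_of_lt ?_)
  nlinarith [mul_nonpos_of_nonneg_of_nonpos ha hsum]

lemma not_collinear_parabola {u v w : ℝ} (huv : u ≠ v) (huw : u ≠ w) (hvw : v ≠ w) :
    ¬ Collinear ℝ ({parabolaPt u, parabolaPt v, parabolaPt w} : Set Pt) := by
  apply not_collinear_of_cross_ne_zero
  simp only [parabolaPt_zero, parabolaPt_one]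
  rw [show (v - u) * (1 + w ^ 2 - (1 + u ^ 2)) - (1 + v ^ 2 - (1 + u ^ 2)) * (w - u) =
    (v - u) * (w - u) * (w - v) by ring]
  exact mul_ne_zero (mul_ne_zero (sub_ne_zero.2 huv.symm) (sub_ne_zero.2 huw.symm))
    (sub_ne_zero.2 hvw.symm)

lemma dist_origin_parabolaPt_le {t : ℝ} (ht : t ≤ 0) :
    dist !₂[0, 0] (parabolaPt t) ≤ dist !₂[1, 0] (parabolaPt t) := by
  rw [dist_eq_sqrt_coords, dist_eq_sqrt_coords]
  refine Real.sqrt_le_sqrt ?_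
  simp only [parabolaPt_zero, parabolaPt_one, Matrix.cons_val_zero, Matrix.cons_val_one]
  nlinarith

lemma dist_parabolaPt_antitone {t t' : ℝ} (htt' : t ≤ t') (ht' : t' ≤ 0) :
    dist !₂[1, 0] (parabolaPt t') ≤ dist !₂[1, 0] (parabolaPt t) := by
  rw [dist_eq_sqrt_coords, dist_eq_sqrt_coords]
  refine Real.sqrt_le_sqrt ?_
  simp only [parabolaPt_zero, parabolaPt_one, Matrix.cons_val_zero, Matrix.cons_val_one]
  nlinarith [mul_nonneg (sub_nonneg.2 htt') (sub_nonneg.2 htt'),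
    mul_nonneg (sub_nonneg.2 htt') (neg_nonneg.2 ht')]

lemma segCross_parabolaPt {t : ℝ} (ht : t < -3 / 2) :
    SegCross !₂[1, 0] (parabolaPt (-2 / 3)) !₂[0, 0] (parabolaPt t) := by
  have hD : 0 < 15 * t ^ 2 + 13 * t + 15 := by nlinarith [sq_nonneg (t + 1)]
  set D := 15 * t ^ 2 + 13 * t + 15
  refine ⟨!₂[13 * t / D, 13 * (1 + t ^ 2) / D],
    ⟨1 - 9 * (1 + t ^ 2) / D, 9 * (1 + t ^ 2) / D, ?_, by positivity, by ring, ?_⟩,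
    ⟨1 - 13 / D, 13 / D, ?_, by positivity, by ring, ?_⟩⟩
  · rw [sub_pos, div_lt_one hD]; nlinarith
  · ext i; fin_cases i <;> simp [parabolaPt] <;> field_simp <;> ring
  · rw [sub_pos, div_lt_one hD]; nlinarith
  · ext i; fin_cases i <;> simp [parabolaPt] <;> field_simp

lemma segCross_comm_left {a b c d : Pt} : SegCross b a c d ↔ SegCross a b c d := by
  simp only [SegCross, openSegment_symm ℝ b a]

lemma segCross_comm_right {a b c d : Pt} : SegCross a b d c ↔ SegCross a b c d := by
  simp only [SegCross, openSegment_symm ℝ d c]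

lemma edgeCross_mk_iff {S : Finset Pt} {a b c d : ↥S} :
    EdgeCross s(a, b) s(c, d) ↔ SegCross a b c d := by
  refine ⟨fun ⟨a', b', c', d', h₁, h₂, h⟩ => ?_, fun h => ⟨a, b, c, d, rfl, rfl, h⟩⟩
  obtain ⟨rfl, rfl⟩ | ⟨rfl, rfl⟩ := Sym2.eq_iff.1 h₁ <;>
    obtain ⟨rfl, rfl⟩ | ⟨rfl, rfl⟩ := Sym2.eq_iff.1 h₂ <;>
    simp_all only [segCross_comm_left, segCross_comm_right]

lemma edgeLen_nonneg {S : Finset Pt} (e : Sym2 ↥S) : 0 ≤ edgeLen e :=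
  e.ind fun _ _ => by rw [edgeLen, Sym2.lift_mk]; exact dist_nonneg

lemma graphLen_eq_sum {S : Finset Pt} (G : SimpleGraph ↥S) :
    graphLen G = ∑ e ∈ G.edgeFinset, edgeLen e := by
  rw [graphLen, ← finsum_mem_coe_finset, SimpleGraph.coe_edgeFinset]

/-- Indices `0` and `1` give the red points, all others blue points. -/
def witnessPt : ℕ → Pt
  | 0 => !₂[0, 0]
  | 1 => !₂[1, 0]
  | k + 2 => parabolaPt (-(k + 2 / 3))

lemma witnessPt_injective : Function.Injective witnessPt := by
  intro i j h
  have h₀ := congrArg (· 0) h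
  rcases i with _ | _ | i <;> rcases j with _ | _ | j <;>
    simp [witnessPt] at h₀ <;> first | rfl | linarith

lemma genPos_witnessPt (s : Finset ℕ) : GenPos (s.image witnessPt) := by
  refine genPos_image_of_lt (fun i j k hij hjk => ?_) s
  have hpos (i : ℕ) : (0 : ℝ) ≤ i := i.cast_nonneg
  rcases i with _ | _ | i <;> rcases j with _ | _ | j <;> rcases k with _ | _ | k <;>
    try omega
  · exact not_collinear_axis_axis_parabola zero_ne_one _
  all_goals
    have hjk' : (j : ℝ) < k := by exact_mod_cast (by omega : j < k)
    have hne : -(j + 2 / 3 : ℝ) ≠ -(k + 2 / 3) := by intro h; linarith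
    have hk : (1 : ℝ) ≤ k := by exact_mod_cast (by omega : 1 ≤ k)
    have hprod : 1 < -(j + 2 / 3 : ℝ) * -(k + 2 / 3) := by
      nlinarith [mul_nonneg (hpos j) (hpos k)]
  · exact not_collinear_axis_parabola_parabola le_rfl hne (by linarith [hpos j, hpos k]) hprod
  · exact not_collinear_axis_parabola_parabola zero_le_one hne (by linarith [hpos j, hpos k]) hprod
  · have hij' : (i : ℝ) < j := by exact_mod_cast (by omega : i < j)
    exact not_collinear_parabola (by intro h; linarith) (by intro h; linarith) hne

def witnessSet (n : ℕ) : Finset Pt := (Finset.range n).image witnessPt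

def witnessCol (p : Pt) : Bool := decide (p = witnessPt 0 ∨ p = witnessPt 1)

def witnessVertex {n : ℕ} (i : ℕ) (hi : i < n) : ↥(witnessSet n) :=
  ⟨witnessPt i, Finset.mem_image_of_mem _ (Finset.mem_range.2 hi)⟩

lemma witnessPt_two : witnessPt 2 = parabolaPt (-2 / 3) := by
  simp [witnessPt, neg_div]

lemma card_witnessSet (n : ℕ) : (witnessSet n).card = n := by
  rw [witnessSet, Finset.card_image_of_injective _ witnessPt_injective, Finset.card_range]

lemma witnessVertex_injective {n i j : ℕ} {hi : i < n} {hj : j < n}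
    (h : witnessVertex i hi = witnessVertex j hj) : i = j :=
  witnessPt_injective (congrArg Subtype.val h)

section WitnessTree

open SimpleGraph

variable {n : ℕ} (hn : 3 ≤ n)

local notation "r₁" => witnessVertex 0 (by omega : 0 < n)
local notation "r₂" => witnessVertex 1 (by omega : 1 < n)
local notation "b₀" => witnessVertex 2 (by omega : 2 < n)

lemma witnessVertex_zero_ne_one : r₁ ≠ r₂ := fun h => by
  simpa using witnessVertex_injective h

lemma witnessVertex_two_notMem : b₀ ∉ ({r₁, r₂} : Finset ↥(witnessSet n)) := by
  simp only [Finset.mem_insert, Finset.mem_singleton, not_or]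
  exact ⟨fun h => by simpa using witnessVertex_injective h,
    fun h => by simpa using witnessVertex_injective h⟩

lemma witnessCol_eq_true_iff (v : ↥(witnessSet n)) : witnessCol v = true ↔ v = r₁ ∨ v = r₂ := by
  simp [witnessCol, witnessVertex, Subtype.ext_iff]

lemma exists_eq_parabolaPt_of_notMem {v : ↥(witnessSet n)}
    (hv : v ∉ ({r₁, r₂} : Finset ↥(witnessSet n))) :
    ∃ t ≤ -2 / 3, (v : Pt) = parabolaPt t ∧ (v ≠ b₀ → t < -3 / 2) := by
  obtain ⟨_, hp⟩ := v
  obtain ⟨i, -, rfl⟩ := Finset.mem_image.1 hp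
  simp only [Finset.mem_insert, Finset.mem_singleton, witnessVertex, ne_eq, Subtype.ext_iff,
    witnessPt_injective.eq_iff, not_or] at hv ⊢
  obtain ⟨k, rfl⟩ : ∃ k, i = k + 2 := ⟨i - 2, by omega⟩
  refine ⟨-(k + 2 / 3), by linarith [k.cast_nonneg (α := ℝ)], rfl, fun hk => ?_⟩
  have : (1 : ℝ) ≤ k := by exact_mod_cast (by omega : 1 ≤ k)
  linarith

lemma isMinBST_witness : IsMinBST witnessCol (starWithLeaf r₁ r₂ b₀) := by
  have h₁₂ := witnessVertex_zero_ne_one hn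
  have hb₀ := witnessVertex_two_notMem hn
  have hred := witnessCol_eq_true_iff hn
  refine ⟨⟨isTree_starWithLeaf h₁₂ hb₀, fun _ _ => starWithLeaf_adj_ne_of_two_red hb₀ hred⟩,
    fun G hG => ?_⟩
  rw [graphLen_eq_sum, graphLen_eq_sum, edgeFinset_starWithLeaf hb₀,
    sum_starWithLeafEdges h₁₂ hb₀]
  refine hG.1.connected.sum_le_sum_edgeFinset_of_two_red hG.2 hred h₁₂ edgeLen
    edgeLen_nonneg b₀ (fun v hv => ?_) (fun v hv => ?_) <;>
    obtain ⟨t, ht, hvt, -⟩ := exists_eq_parabolaPt_of_notMem hn hv <;>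
    simp only [edgeLen, Sym2.lift_mk, witnessVertex, hvt, witnessPt_two]
  · exact dist_origin_parabolaPt_le (by linarith)
  · exact dist_parabolaPt_antitone ht (by norm_num)

lemma card_edgeCross_witness :
    Nat.card {e | e ∈ (starWithLeaf r₁ r₂ b₀).edgeSet ∧ e ≠ s(r₂, b₀) ∧ EdgeCross s(r₂, b₀) e} =
      n - 3 := by
  have hb₀ := witnessVertex_two_notMem hn
  rw [card_edgeSet_starWithLeaf_inter (witnessVertex_zero_ne_one hn) hb₀, Fintype.card_coe,
    card_witnessSet]
  intro v hv
  rw [edgeCross_mk_iff]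
  obtain ⟨t, -, hvt, hfar⟩ := exists_eq_parabolaPt_of_notMem hn hv
  refine ⟨?_, fun hne => ?_⟩
  · rintro ⟨p, hp₂, hp₁⟩ rfl
    have hgen := genPos_witnessPt (Finset.range n) _ (witnessVertex 1 (by omega)).2 _
      (witnessVertex 0 (by omega)).2 _ b₀.2
      (witnessPt_injective.ne (by norm_num : 1 ≠ 0))
      (witnessPt_injective.ne (by norm_num : 1 ≠ 2)) (witnessPt_injective.ne (by norm_num : 0 ≠ 2))
    exact Set.disjoint_left.1 (disjoint_openSegment_of_not_collinear hgen) hp₂ hp₁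
  · simp only [witnessVertex, hvt, witnessPt_two]
    exact segCross_parabolaPt (hfar hne)

end WitnessTree

/-- For every `n ≥ 3` there is a bicolored set of `n` points in
general position, with at least one red and one blue point, such that some minimum
bichromatic spanning tree of it has an edge crossing exactly `n − 3` other edges. -/
theorem exists_minBST_edge_with_max_crossings (n : ℕ) (hn : 3 ≤ n) :
    ∃ (S : Finset Pt) (col : Pt → Bool) (T : SimpleGraph ↥S) (e : Sym2 ↥S),
      S.card = n ∧ GenPos S ∧
      (∃ r ∈ S, col r = true) ∧ (∃ b ∈ S, col b = false) ∧
      IsMinBST col T ∧ e ∈ T.edgeSet ∧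
      Nat.card {e' : Sym2 ↥S | e' ∈ T.edgeSet ∧ e' ≠ e ∧ EdgeCross e e'} = n - 3 := by
  have hb₀ := witnessVertex_two_notMem hn
  refine ⟨witnessSet n, witnessCol,
    .starWithLeaf (witnessVertex 0 (by omega)) (witnessVertex 1 (by omega))
      (witnessVertex 2 (by omega)),
    s(witnessVertex 1 (by omega), witnessVertex 2 (by omega)), card_witnessSet n,
    genPos_witnessPt _, ⟨_, (witnessVertex 0 (by omega)).2, ?_⟩,
    ⟨_, (witnessVertex 2 (by omega)).2, ?_⟩, isMinBST_witness hn,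
    SimpleGraph.starWithLeaf_adj_leaf hb₀, card_edgeCross_witness hn⟩
  · exact (witnessCol_eq_true_iff hn _).2 (.inl rfl)
  · simpa [← witnessCol_eq_true_iff hn] using hb₀
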